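/- Let k ≥ 1, V ∈ ℝ^k, and Δt > 0. Then the Gaussian first absolute moment with mean −V·Δt and variance Δt·I satisfies ∫_{ℝ^k} ‖z‖·f_{−V·Δt, Δt}(z) dz ≤ k·√(2/π)·√Δt·exp(−‖V‖²·Δt/2) + k·‖V‖·Δt. -/

import Mathlib

open MeasureTheory Real

/-- Density of the multivariate normal distribution `N(μ, v·I)` on `ℝ^k`
(with variance parameter `v = σ²`). -/
noncomputable def gaussDensity (k : ℕ) (μ : EuclideanSpace ℝ (Fin k)) (v : ℝ)
    (z : EuclideanSpace ℝ (Fin k)) : ℝ :=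
  (2 * Real.pi * v) ^ (-(k : ℝ) / 2) * Real.exp (-‖z - μ‖ ^ 2 / (2 * v))

/-!
Since `‖z‖ ≤ ∑ i, |z i|` and the density factors into one-dimensional densities of `N(mᵢ, Δt)`
with `mᵢ = -Δt Vᵢ`, the moment is at most `∑ i, 𝔼|Xᵢ|`. For `X ~ N(m, v)` with `m ≥ 0`, writing
`|x| = x + 2 max (-x) 0` gives `𝔼|X| = m + 2 𝔼[max (-X) 0]`, and on the negative half-line the
density is at most `exp (-m²/2v)` times the centred one, so `𝔼|X| ≤ |m| + √(2v/π) exp (-m²/2v)`.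
Finally `a ↦ a + √(2/π) exp (-a²/2)` is increasing (as `|a| exp (-a²/2) ≤ 1`), so each coordinate
bound only grows when `|Vᵢ|` is replaced by `‖V‖`.
-/

open Set ProbabilityTheory
open scoped NNReal

theorem integral_Ioi_mul_exp_neg_mul_sq {b : ℝ} (hb : 0 < b) :
    ∫ r : ℝ in Ioi 0, r * exp (-b * r ^ 2) = (2 * b)⁻¹ := by
  have h := integral_mul_cexp_neg_mul_sq (b := (b : ℂ)) (by simpa using hb)
  have hofReal : ∀ r : ℝ, (r : ℂ) * Complex.exp (-(b : ℂ) * (r : ℂ) ^ 2)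
      = ((r * exp (-b * r ^ 2) : ℝ) : ℂ) := by
    intro r; push_cast; rfl
  simp_rw [hofReal, integral_complex_ofReal] at h
  exact_mod_cast h

namespace ProbabilityTheory

variable {m : ℝ} {v : ℝ≥0}

lemma gaussianPDFReal_neg (m : ℝ) (v : ℝ≥0) (x : ℝ) :
    gaussianPDFReal m v (-x) = gaussianPDFReal (-m) v x := by
  simp only [gaussianPDFReal]
  ring_nf

lemma integrable_mul_gaussianPDFReal (m : ℝ) (hv : v ≠ 0) :
    Integrable fun x ↦ x * gaussianPDFReal m v x := by
  have h := (memLp_id_gaussianReal (μ := m) (v := v) 1).integrable le_rfl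
  rw [gaussianReal_of_var_ne_zero _ hv, integrable_withDensity_iff_integrable_smul'
    (measurable_gaussianPDF _ _) (ae_of_all _ fun _ ↦ gaussianPDF_lt_top)] at h
  simpa [mul_comm] using h

lemma integrable_abs_mul_gaussianPDFReal (m : ℝ) (hv : v ≠ 0) :
    Integrable fun x ↦ |x| * gaussianPDFReal m v x := by
  simpa [abs_mul, abs_of_nonneg (gaussianPDFReal_nonneg m v _)] using
    (integrable_mul_gaussianPDFReal m hv).abs

lemma integral_mul_gaussianPDFReal (m : ℝ) (hv : v ≠ 0) :
    ∫ x, x * gaussianPDFReal m v x = m := by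
  have h := integral_id_gaussianReal (μ := m) (v := v)
  rw [integral_gaussianReal_eq_integral_smul hv] at h
  simpa [mul_comm] using h

lemma setIntegral_Ioi_mul_gaussianPDFReal_zero (hv : v ≠ 0) :
    ∫ x in Ioi 0, x * gaussianPDFReal 0 v x = √(v / (2 * π)) := by
  have h := integral_Ioi_mul_exp_neg_mul_sq (b := (2 * v)⁻¹) (by positivity)
  simp only [gaussianPDFReal, sub_zero]
  simp_rw [mul_left_comm _ (√(2 * π * v))⁻¹, integral_const_mul, neg_div, div_eq_inv_mul (_ ^ 2),
    ← neg_mul, h]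
  rw [show (2 * (2 * (v : ℝ))⁻¹)⁻¹ = v by field_simp, eq_comm,
    sqrt_eq_iff_mul_self_eq_of_pos (by positivity)]
  field_simp
  rw [sq_sqrt (by positivity)]

lemma gaussianPDFReal_neg_le (hm : 0 ≤ m) {y : ℝ} (hy : 0 ≤ y) :
    gaussianPDFReal m v (-y) ≤ exp (-m ^ 2 / (2 * v)) * gaussianPDFReal 0 v y := by
  simp only [gaussianPDFReal, sub_zero]
  rw [mul_left_comm, ← exp_add]
  gcongr
  rw [← add_div, ← neg_add]
  gcongr
  nlinarith [mul_nonneg hm hy]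

lemma setIntegral_Iic_neg_mul_gaussianPDFReal_le (hm : 0 ≤ m) (hv : v ≠ 0) :
    ∫ x in Iic 0, -x * gaussianPDFReal m v x ≤ exp (-m ^ 2 / (2 * v)) * √(v / (2 * π)) := by
  rw [← setIntegral_Ioi_mul_gaussianPDFReal_zero hv, ← integral_const_mul]
  have hflip := integral_comp_neg_Iic 0 fun y ↦ y * gaussianPDFReal m v (-y)
  simp only [neg_neg, neg_zero] at hflip
  rw [hflip]
  refine setIntegral_mono_on ?_ ?_ measurableSet_Ioi fun y hy ↦ ?_
  · simp_rw [gaussianPDFReal_neg]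
    exact (integrable_mul_gaussianPDFReal (-m) hv).integrableOn
  · exact ((integrable_mul_gaussianPDFReal 0 hv).const_mul _).integrableOn
  · rw [mul_left_comm]
    exact mul_le_mul_of_nonneg_left (gaussianPDFReal_neg_le hm (le_of_lt hy)) (le_of_lt hy)

lemma integral_abs_mul_gaussianPDFReal_le_of_nonneg (hm : 0 ≤ m) (hv : v ≠ 0) :
    ∫ x, |x| * gaussianPDFReal m v x ≤ m + 2 * (exp (-m ^ 2 / (2 * v)) * √(v / (2 * π))) := by
  have hsplit : ∀ x, |x| * gaussianPDFReal m v x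
      = x * gaussianPDFReal m v x
        + 2 * (Iic 0).indicator (fun x ↦ -x * gaussianPDFReal m v x) x := by
    intro x
    rcases le_or_gt x 0 with hx | hx
    · rw [indicator_of_mem (mem_Iic.2 hx), abs_of_nonpos hx]; ring
    · rw [indicator_of_notMem (notMem_Iic.2 hx), abs_of_pos hx]; ring
  have hint : Integrable ((Iic 0).indicator fun x ↦ -x * gaussianPDFReal m v x) := by
    have hneg : Integrable fun x ↦ -x * gaussianPDFReal m v x := by
      simpa only [neg_mul] using (integrable_mul_gaussianPDFReal m hv).fun_neg
    exact hneg.indicator measurableSet_Iic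
  rw [integral_congr_ae (ae_of_all _ hsplit),
    integral_add (integrable_mul_gaussianPDFReal m hv) (hint.const_mul 2), integral_const_mul,
    integral_indicator measurableSet_Iic, integral_mul_gaussianPDFReal m hv]
  gcongr
  exact setIntegral_Iic_neg_mul_gaussianPDFReal_le hm hv

lemma integral_abs_mul_gaussianPDFReal_abs (m : ℝ) (v : ℝ≥0) :
    ∫ x, |x| * gaussianPDFReal |m| v x = ∫ x, |x| * gaussianPDFReal m v x := by
  rcases abs_choice m with h | h
  · rw [h]
  · rw [h, ← integral_neg_eq_self]
    simp only [abs_neg, gaussianPDFReal_neg, neg_neg]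

lemma integral_abs_mul_gaussianPDFReal_le (m : ℝ) (hv : v ≠ 0) :
    ∫ x, |x| * gaussianPDFReal m v x ≤ |m| + √(2 / π) * √v * exp (-m ^ 2 / (2 * v)) := by
  rw [← integral_abs_mul_gaussianPDFReal_abs]
  refine (integral_abs_mul_gaussianPDFReal_le_of_nonneg (abs_nonneg m) hv).trans_eq ?_
  rw [sq_abs, sqrt_div' _ (by positivity : (0 : ℝ) ≤ 2 * π), sqrt_div' _ Real.pi_pos.le,
    sqrt_mul zero_le_two]
  field_simp
  linear_combination -(exp (-(m ^ 2 / (2 * v))) * √v) * mul_self_sqrt (zero_le_two : (0 : ℝ) ≤ 2)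

end ProbabilityTheory

lemma abs_mul_exp_neg_sq_div_two_le_one (a : ℝ) : |a| * exp (-a ^ 2 / 2) ≤ 1 := by
  rw [neg_div, exp_neg, ← div_eq_mul_inv, div_le_one (exp_pos _)]
  nlinarith [add_one_le_exp (a ^ 2 / 2), sq_abs a, sq_nonneg (|a| - 1)]

lemma monotone_add_mul_exp_neg_sq_div_two {c : ℝ} (hc : |c| ≤ 1) :
    Monotone fun a : ℝ ↦ a + c * exp (-a ^ 2 / 2) := by
  have hderiv : ∀ a : ℝ, HasDerivAt (fun a : ℝ ↦ a + c * exp (-a ^ 2 / 2))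
      (1 - c * (a * exp (-a ^ 2 / 2))) a := by
    intro a
    have hsq : HasDerivAt (fun a : ℝ ↦ -a ^ 2 / 2) (-a) a :=
      ((hasDerivAt_pow 2 a).fun_neg.div_const 2).congr_deriv (by ring)
    exact ((hasDerivAt_id' a).fun_add (hsq.exp.const_mul c)).congr_deriv (by ring)
  refine monotone_of_deriv_nonneg (fun a ↦ (hderiv a).differentiableAt) fun a ↦ ?_
  rw [(hderiv a).deriv, sub_nonneg]
  calc c * (a * exp (-a ^ 2 / 2)) ≤ |c| * (|a| * exp (-a ^ 2 / 2)) := by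
        simpa only [abs_mul, abs_of_pos (exp_pos _)] using le_abs_self (c * (a * exp (-a ^ 2 / 2)))
    _ ≤ 1 * 1 := by
        gcongr
        exact abs_mul_exp_neg_sq_div_two_le_one a
    _ = 1 := one_mul 1

lemma abs_add_sqrt_mul_exp_le {m M v : ℝ} (hv : 0 < v) (hmM : |m| ≤ M) :
    |m| + √(2 / π) * √v * exp (-m ^ 2 / (2 * v))
      ≤ M + √(2 / π) * √v * exp (-M ^ 2 / (2 * v)) := by
  have hc : |√(2 / π)| ≤ 1 := by
    rw [abs_of_nonneg (sqrt_nonneg _), sqrt_le_one]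
    rw [div_le_one pi_pos]; linarith [pi_gt_three]
  have hσ : 0 < √v := sqrt_pos.2 hv
  have h := monotone_add_mul_exp_neg_sq_div_two hc (div_le_div_of_nonneg_right hmM hσ.le)
  have hsq : ∀ x : ℝ, (x / √v) ^ 2 / 2 = x ^ 2 / (2 * v) := fun x ↦ by
    rw [div_pow, sq_sqrt hv.le]; ring
  simp only [neg_div, hsq, sq_abs] at h
  have := mul_le_mul_of_nonneg_left h hσ.le
  field_simp at this
  simp only [neg_div]
  linarith [this]

lemma EuclideanSpace.norm_le_sum_abs {ι : Type*} [Fintype ι] (z : EuclideanSpace ℝ ι) :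
    ‖z‖ ≤ ∑ i, |z i| := by
  conv_lhs => rw [← (EuclideanSpace.basisFun ι ℝ).sum_repr z]
  refine (norm_sum_le _ _).trans_eq ?_
  simp [norm_smul]

lemma gaussDensity_eq_prod_gaussianPDFReal (k : ℕ) (μ : EuclideanSpace ℝ (Fin k)) {v : ℝ}
    (hv : 0 ≤ v) (z : EuclideanSpace ℝ (Fin k)) :
    gaussDensity k μ v z = ∏ i, gaussianPDFReal (μ i) v.toNNReal (z i) := by
  have hnorm : (2 * π * v) ^ (-(k : ℝ) / 2) = (√(2 * π * v))⁻¹ ^ k := by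
    rw [sqrt_eq_rpow, ← rpow_neg (by positivity), ← rpow_natCast, ← rpow_mul (by positivity)]
    ring_nf
  have hexp : -‖z - μ‖ ^ 2 / (2 * v) = ∑ i, -(z i - μ i) ^ 2 / (2 * v) := by
    simp [EuclideanSpace.norm_sq_eq, ← Finset.sum_div]
  simp only [gaussDensity, gaussianPDFReal, Real.coe_toNNReal _ hv, hnorm, hexp, exp_sum,
    Finset.prod_mul_distrib, Finset.prod_const, Finset.card_univ, Fintype.card_fin]

section ProductDensity

variable {ι : Type*} [Fintype ι] (p : ι → ℝ → ℝ)

lemma comp_eval_mul_prod_eq_prod [DecidableEq ι] (i : ι) (φ : ℝ → ℝ) (x : ι → ℝ) :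
    φ (x i) * ∏ j, p j (x j) = ∏ j, (if j = i then φ (x j) else 1) * p j (x j) := by
  rw [Finset.prod_mul_distrib, Finset.prod_ite_eq' Finset.univ i, if_pos (Finset.mem_univ i)]

lemma integrable_comp_eval_mul_prod (hp : ∀ j, Integrable (p j)) (i : ι) {φ : ℝ → ℝ}
    (hφ : Integrable fun t ↦ φ t * p i t) :
    Integrable fun x : ι → ℝ ↦ φ (x i) * ∏ j, p j (x j) := by
  classical
  simp_rw [comp_eval_mul_prod_eq_prod]
  refine Integrable.fintype_prod (f := fun j t ↦ (if j = i then φ t else 1) * p j t)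
    (μ := fun _ ↦ volume) fun j ↦ ?_
  by_cases hj : j = i
  · subst hj; simpa using hφ
  · simpa [hj] using hp j

lemma integral_comp_eval_mul_prod (i : ι) (hp : ∀ j ≠ i, ∫ t, p j t = 1) (φ : ℝ → ℝ) :
    ∫ x : ι → ℝ, φ (x i) * ∏ j, p j (x j) = ∫ t, φ t * p i t := by
  classical
  simp_rw [comp_eval_mul_prod_eq_prod]
  rw [integral_fintype_prod_volume_eq_prod fun j t ↦ (if j = i then φ t else 1) * p j t]
  rw [Finset.prod_eq_single_of_mem i (Finset.mem_univ i) fun j _ hj ↦ by simpa [hj] using hp j hj]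
  simp

lemma integral_norm_mul_prod_le_sum (hp_nonneg : ∀ i t, 0 ≤ p i t) (hp : ∀ i, Integrable (p i))
    (hp_one : ∀ i, ∫ t, p i t = 1) (hp_abs : ∀ i, Integrable fun t ↦ |t| * p i t) :
    ∫ z : EuclideanSpace ℝ ι, ‖z‖ * ∏ i, p i (z i) ≤ ∑ i, ∫ t, |t| * p i t := by
  rw [← (PiLp.volume_preserving_toLp ι).integral_comp
    (MeasurableEquiv.toLp 2 (ι → ℝ)).measurableEmbedding]
  have hint : ∀ i, Integrable fun x : ι → ℝ ↦ |x i| * ∏ j, p j (x j) := fun i ↦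
    integrable_comp_eval_mul_prod p hp i (hp_abs i)
  calc ∫ x : ι → ℝ, ‖WithLp.toLp 2 x‖ * ∏ i, p i (WithLp.toLp 2 x i)
      ≤ ∫ x : ι → ℝ, ∑ i, |x i| * ∏ j, p j (x j) := by
        refine integral_mono_of_nonneg (ae_of_all _ fun x ↦ ?_)
          (integrable_finsetSum _ fun i _ ↦ hint i) (ae_of_all _ fun x ↦ ?_)
        · exact mul_nonneg (norm_nonneg _) (Finset.prod_nonneg fun i _ ↦ hp_nonneg i _)
        · dsimp only
          rw [← Finset.sum_mul]
          exact mul_le_mul_of_nonneg_right (EuclideanSpace.norm_le_sum_abs _)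
            (Finset.prod_nonneg fun i _ ↦ hp_nonneg i _)
    _ = ∑ i, ∫ t, |t| * p i t := by
        rw [integral_finsetSum _ fun i _ ↦ hint i]
        exact Finset.sum_congr rfl fun i _ ↦
          integral_comp_eval_mul_prod p i (fun j _ ↦ hp_one j) _

end ProductDensity

theorem gaussian_walker_moment_bound_general (k : ℕ)
    (V : EuclideanSpace ℝ (Fin k)) (Δt : ℝ) (hΔt : 0 < Δt) :
    ∫ z : EuclideanSpace ℝ (Fin k), ‖z‖ * gaussDensity k (-(Δt • V)) Δt z ≤
      (k : ℝ) * Real.sqrt (2 / Real.pi) * Real.sqrt Δt * Real.exp (-‖V‖ ^ 2 * Δt / 2)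
        + (k : ℝ) * ‖V‖ * Δt := by
  set μ := -(Δt • V)
  have hv : Δt.toNNReal ≠ 0 := by simpa using hΔt
  have hcoord : ∀ i, ∫ t, |t| * gaussianPDFReal (μ i) Δt.toNNReal t
      ≤ Δt * ‖V‖ + √(2 / π) * √Δt * exp (-‖V‖ ^ 2 * Δt / 2) := by
    intro i
    have hμ : |μ i| ≤ Δt * ‖V‖ := by
      simpa [μ, abs_mul, abs_of_pos hΔt] using
        mul_le_mul_of_nonneg_left (PiLp.norm_apply_le V i) hΔt.le
    refine (integral_abs_mul_gaussianPDFReal_le _ hv).trans ?_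
    rw [Real.coe_toNNReal _ hΔt.le]
    refine (abs_add_sqrt_mul_exp_le hΔt hμ).trans_eq ?_
    rw [show -(Δt * ‖V‖) ^ 2 / (2 * Δt) = -‖V‖ ^ 2 * Δt / 2 by field_simp]
  calc ∫ z, ‖z‖ * gaussDensity k μ Δt z
      = ∫ z : EuclideanSpace ℝ (Fin k), ‖z‖ * ∏ i, gaussianPDFReal (μ i) Δt.toNNReal (z i) := by
        simp_rw [gaussDensity_eq_prod_gaussianPDFReal k μ hΔt.le]
    _ ≤ ∑ i, ∫ t, |t| * gaussianPDFReal (μ i) Δt.toNNReal t :=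
        integral_norm_mul_prod_le_sum (fun i ↦ gaussianPDFReal (μ i) Δt.toNNReal)
          (fun i ↦ gaussianPDFReal_nonneg _ _) (fun i ↦ integrable_gaussianPDFReal _ _)
          (fun i ↦ integral_gaussianPDFReal_eq_one _ hv)
          (fun i ↦ integrable_abs_mul_gaussianPDFReal _ hv)
    _ ≤ ∑ _i : Fin k, (Δt * ‖V‖ + √(2 / π) * √Δt * exp (-‖V‖ ^ 2 * Δt / 2)) :=
        Finset.sum_le_sum fun i _ ↦ hcoord i
    _ = _ := by
        simp only [Finset.sum_const, Finset.card_univ, Fintype.card_fin, nsmul_eq_mul]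
        ring

/-- The first absolute moment of the Gaussian `N(−V·Δt, Δt·I)` on `ℝ^k` is bounded by
`k·√(2/π)·√Δt·exp(−‖V‖²Δt/2) + k·‖V‖·Δt`. -/
theorem gaussian_walker_moment_bound (k : ℕ) (hk : 1 ≤ k)
    (V : EuclideanSpace ℝ (Fin k)) (Δt : ℝ) (hΔt : 0 < Δt) :
    ∫ z : EuclideanSpace ℝ (Fin k), ‖z‖ * gaussDensity k (-(Δt • V)) Δt z ≤
      (k : ℝ) * Real.sqrt (2 / Real.pi) * Real.sqrt Δt * Real.exp (-‖V‖ ^ 2 * Δt / 2)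
        + (k : ℝ) * ‖V‖ * Δt :=
  gaussian_walker_moment_bound_general k V Δt hΔt
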